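/- Let E be a metric space, let α be a type, let ψ : E → α, let s ∈ E and a ∈ α, and suppose there exists ε > 0 such that for every f ∈ E with dist(f, s) < ε one has ψ(f) = a. Let (Ω, F, P) be a probability space, let (Z_k) be a sequence of E-valued random variables converging in probability to s, let (G_k) be a sequence of sub-σ-algebras of F, and set Y_k = E[1_{{ψ(Z_k) = a}} | G_k]. Then Y_k converges to 1 in probability as k → ∞. -/

import Mathlib

/-!
Since `ψ = a` near `s`, the event `ψ (Z k) ≠ a` forces `Z k` to stay away from `s`, so its
probability tends to `0`. Conditional expectation is an `L¹`-contraction, so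
`E |Y k - 1| ≤ E |1_{ψ (Z k) = a} - 1| = P (ψ (Z k) ≠ a) → 0`, and `L¹` convergence implies
convergence in probability.
-/

open MeasureTheory Filter

open scoped Topology

lemma tendsto_measure_compl_setOf_eq_of_eventually_eq {Ω E α : Type*} [MeasurableSpace Ω]
    [PseudoMetricSpace E] {μ : Measure Ω} {ψ : E → α} {s : E} {a : α} {Z : ℕ → Ω → E}
    (hψ : ∀ᶠ x in 𝓝 s, ψ x = a)
    (hZ : ∀ δ > (0 : ℝ), Tendsto (fun k => μ {ω | δ < dist (Z k ω) s}) atTop (𝓝 0)) :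
    Tendsto (fun k => μ {ω | ψ (Z k ω) = a}ᶜ) atTop (𝓝 0) := by
  obtain ⟨ε, hε, hball⟩ := Metric.eventually_nhds_iff.mp hψ
  refine tendsto_of_tendsto_of_tendsto_of_le_of_le tendsto_const_nhds (hZ (ε / 2) (by positivity))
    (fun _ => zero_le) fun k => measure_mono fun ω hω => ?_
  by_contra h
  exact hω (hball ((not_lt.mp h).trans_lt (by linarith)))

section CondExp

variable {Ω : Type*} {m m₀ : MeasurableSpace Ω} {μ : Measure Ω} [IsFiniteMeasure μ]

lemma eLpNorm_one_condExp_indicator_sub_one_le (hm : m ≤ m₀) {A : Set Ω}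
    (hA : MeasurableSet A) :
    eLpNorm (μ[A.indicator (fun _ => (1 : ℝ)) | m] - 1) 1 μ ≤ μ Aᶜ := by
  have hsub : μ[A.indicator (fun _ => (1 : ℝ)) | m] - 1
      =ᵐ[μ] μ[A.indicator (fun _ => (1 : ℝ)) - fun _ => 1 | m] := by
    have := condExp_sub ((integrable_const (1 : ℝ)).indicator hA) (integrable_const (1 : ℝ)) m
      (μ := μ)
    rw [condExp_const hm] at this
    exact this.symm
  calc eLpNorm (μ[A.indicator (fun _ => (1 : ℝ)) | m] - 1) 1 μ
      = eLpNorm (μ[A.indicator (fun _ => (1 : ℝ)) - fun _ => 1 | m]) 1 μ :=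
        eLpNorm_congr_ae hsub
    _ ≤ eLpNorm (A.indicator (fun _ => (1 : ℝ)) - fun _ => 1) 1 μ :=
        eLpNorm_condExp_le_eLpNorm _ le_rfl
    _ = eLpNorm (Aᶜ.indicator fun _ => (1 : ℝ)) 1 μ := by
        rw [← eLpNorm_neg, Set.indicator_compl, neg_sub]
    _ ≤ μ Aᶜ := by simpa using eLpNorm_indicator_const_le (μ := μ) (s := Aᶜ) (c := (1 : ℝ)) 1

lemma tendstoInMeasure_condExp_indicator {G : ℕ → MeasurableSpace Ω} (hG : ∀ k, G k ≤ m₀)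
    {A : ℕ → Set Ω} (hA : ∀ k, MeasurableSet (A k))
    (hAc : Tendsto (fun k => μ (A k)ᶜ) atTop (𝓝 0)) :
    TendstoInMeasure μ (fun k => μ[(A k).indicator (fun _ => (1 : ℝ)) | G k]) atTop 1 :=
  tendstoInMeasure_of_tendsto_eLpNorm one_ne_zero
    (fun k => stronglyMeasurable_condExp.aestronglyMeasurable.mono (hG k))
    aestronglyMeasurable_const
    (tendsto_of_tendsto_of_tendsto_of_le_of_le tendsto_const_nhds hAc (fun _ => zero_le)
      fun k => eLpNorm_one_condExp_indicator_sub_one_le (hG k) (hA k))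

end CondExp

/-- Abstract form of the paper's Lemma: if `ψ` is locally stable at `s` (there is
`ε > 0` with `ψ f = a` whenever `dist f s < ε`), `(Z k)` converges in probability
to `s`, and `Y k = E[1_{{ψ (Z k) = a}} | G k]` for sub-σ-algebras `G k`, then the
(bootstrap support) random variables `Y k` converge to `1` in probability. -/
theorem bootstrap_support_lemma
    {E : Type*} [MetricSpace E] {α : Type*} (ψ : E → α) (s : E) (a : α)
    (hstable : ∃ ε > (0 : ℝ), ∀ f : E, dist f s < ε → ψ f = a)
    {Ω : Type*} [F : MeasurableSpace Ω] (P : Measure Ω) [IsProbabilityMeasure P]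
    (Z : ℕ → Ω → E)
    (hZmeas : ∀ k, MeasurableSet {ω | ψ (Z k ω) = a})
    (hconv : ∀ δ > (0 : ℝ),
      Tendsto (fun k => P {ω | δ < dist (Z k ω) s}) atTop (nhds 0))
    (G : ℕ → MeasurableSpace Ω) (hG : ∀ k, G k ≤ F)
    (Y : ℕ → Ω → ℝ)
    (hY : ∀ k,
      Y k = P[Set.indicator {ω | ψ (Z k ω) = a} (fun _ => (1 : ℝ)) | G k]) :
    ∀ δ > (0 : ℝ),
      Tendsto (fun k => P {ω | δ < |Y k ω - 1|}) atTop (nhds 0) := by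
  have hψ : ∀ᶠ x in 𝓝 s, ψ x = a := Metric.eventually_nhds_iff.mpr hstable
  have hY_tendsto : TendstoInMeasure P Y atTop 1 := by
    simpa only [← funext hY] using tendstoInMeasure_condExp_indicator hG hZmeas
      (tendsto_measure_compl_setOf_eq_of_eventually_eq hψ hconv)
  intro δ hδ
  refine tendsto_of_tendsto_of_tendsto_of_le_of_le tendsto_const_nhds
    (tendstoInMeasure_iff_norm.mp hY_tendsto δ hδ) (fun _ => zero_le)
    fun k => measure_mono fun ω (hω : δ < |Y k ω - 1|) => hω.le
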